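/- Let H be a finite-dimensional complex inner product space and let Π and Δ be orthogonal projections on H. Then the Moore–Penrose pseudoinverse of the product Π(I − Δ) satisfies (Π(I − Δ))⁺ = (I − Δ) Π (Π − ΠΔΠ)⁺. -/

import Mathlib

open LinearMap

/-- The four Moore–Penrose equations: `B` is the Moore–Penrose pseudoinverse of `A`. -/
def IsMPInv {H : Type*} [NormedAddCommGroup H] [InnerProductSpace ℂ H]
    [FiniteDimensional ℂ H] (A B : H →ₗ[ℂ] H) : Prop :=
  A ∘ₗ B ∘ₗ A = A ∧ B ∘ₗ A ∘ₗ B = B ∧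
    adjoint (A ∘ₗ B) = A ∘ₗ B ∧ adjoint (B ∘ₗ A) = B ∘ₗ A

/-!
Write `A = Π(I − Δ)`. Since `I − Δ` is an orthogonal projection, `A A* = Π(I − Δ)Π = Π − ΠΔΠ`,
so the claim is the identity `A⁺ = A* (A A*)⁺`, which holds in any star ring where
`x x* = 0` forces `x = 0`: with `b = (A A*)⁺`, the element `y = (A A* b − 1) A` satisfies
`y y* = (A A* b A A* − A A*)(A A* b − 1)* = 0`, hence `A A* b A = A`, and the remaining
Moore–Penrose equations for `A* b` follow from those for `b`.
-/

structure IsMoorePenroseInverse {R : Type*} [Mul R] [Star R] (a b : R) : Prop where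
  mul_mul_self_left : a * b * a = a
  mul_mul_self_right : b * a * b = b
  isSelfAdjoint_mul : IsSelfAdjoint (a * b)
  isSelfAdjoint_mul_rev : IsSelfAdjoint (b * a)

namespace IsMoorePenroseInverse

section StarMonoid

variable {R : Type*} [Monoid R] [StarMul R] {a b c : R}

protected theorem star (h : IsMoorePenroseInverse a b) :
    IsMoorePenroseInverse (star a) (star b) where
  mul_mul_self_left := by rw [← star_mul, ← star_mul, ← mul_assoc, h.mul_mul_self_left]
  mul_mul_self_right := by rw [← star_mul, ← star_mul, ← mul_assoc, h.mul_mul_self_right]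
  isSelfAdjoint_mul := by rw [← star_mul]; exact IsSelfAdjoint.star_iff.2 h.isSelfAdjoint_mul_rev
  isSelfAdjoint_mul_rev := by rw [← star_mul]; exact IsSelfAdjoint.star_iff.2 h.isSelfAdjoint_mul

theorem eq_mul_mul_left (hb : IsMoorePenroseInverse a b) (hc : IsMoorePenroseInverse a c) :
    b = b * a * c :=
  calc b = b * (a * b) := by rw [← mul_assoc, hb.mul_mul_self_right]
    _ = b * (star b * star (a * c * a)) := by
      rw [hc.mul_mul_self_left, ← star_mul, hb.isSelfAdjoint_mul.star_eq]
    _ = b * star (a * b) * star (a * c) := by simp only [star_mul, mul_assoc]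
    _ = b * a * c := by
      rw [hb.isSelfAdjoint_mul.star_eq, hc.isSelfAdjoint_mul.star_eq, ← mul_assoc b a b,
        hb.mul_mul_self_right, mul_assoc]

theorem eq_mul_mul_right (hb : IsMoorePenroseInverse a b) (hc : IsMoorePenroseInverse a c) :
    c = b * a * c :=
  calc c = c * a * c := hc.mul_mul_self_right.symm
    _ = star (a * b * a) * star c * c := by
      rw [hb.mul_mul_self_left, ← star_mul, hc.isSelfAdjoint_mul_rev.star_eq]
    _ = star (b * a) * star (c * a) * c := by simp only [star_mul, mul_assoc]
    _ = b * a * c := by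
      rw [hb.isSelfAdjoint_mul_rev.star_eq, hc.isSelfAdjoint_mul_rev.star_eq, mul_assoc (b * a),
        hc.mul_mul_self_right]

theorem unique (hb : IsMoorePenroseInverse a b) (hc : IsMoorePenroseInverse a c) : b = c :=
  (hb.eq_mul_mul_left hc).trans (hb.eq_mul_mul_right hc).symm

theorem isSelfAdjoint (h : IsMoorePenroseInverse a b) (ha : IsSelfAdjoint a) :
    IsSelfAdjoint b :=
  (ha.star_eq ▸ h.star).unique h

end StarMonoid

section StarRing

variable {R : Type*} [Ring R] [StarRing R] {a b : R}

theorem mul_star_mul_mul_self (hR : ∀ x : R, x * star x = 0 → x = 0)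
    (hb : IsMoorePenroseInverse (a * star a) b) : a * star a * b * a = a := by
  have hy : (a * star a * b - 1) * a = 0 := by
    apply hR
    calc (a * star a * b - 1) * a * star ((a * star a * b - 1) * a)
        = (a * star a * b * (a * star a) - a * star a) * star (a * star a * b - 1) := by
          rw [star_mul]; noncomm_ring
      _ = 0 := by rw [hb.mul_mul_self_left, sub_self, zero_mul]
  rwa [sub_mul, one_mul, sub_eq_zero] at hy

theorem star_mul_of_mul_star (hR : ∀ x : R, x * star x = 0 → x = 0)
    (hb : IsMoorePenroseInverse (a * star a) b) : IsMoorePenroseInverse a (star a * b) where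
  mul_mul_self_left := by
    rw [← mul_assoc a]; exact mul_star_mul_mul_self hR hb
  mul_mul_self_right := by
    calc star a * b * a * (star a * b) = star a * (b * (a * star a) * b) := by noncomm_ring
      _ = star a * b := by rw [hb.mul_mul_self_right]
  isSelfAdjoint_mul := by rw [← mul_assoc]; exact hb.isSelfAdjoint_mul
  isSelfAdjoint_mul_rev := by
    have hbs : IsSelfAdjoint b := hb.isSelfAdjoint (.mul_star_self a)
    simp only [IsSelfAdjoint, star_mul, star_star, hbs.star_eq, mul_assoc]

end StarRing

end IsMoorePenroseInverse

theorem IsStarProjection.mul_one_sub_mul_star {R : Type*} [Ring R] [StarRing R] {p q : R}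
    (hp : IsStarProjection p) (hq : IsStarProjection q) :
    p * (1 - q) * star (p * (1 - q)) = p - p * q * p := by
  rw [star_mul, hp.isSelfAdjoint.star_eq, hq.one_sub.isSelfAdjoint.star_eq, mul_assoc,
    ← mul_assoc (1 - q), hq.one_sub.isIdempotentElem.eq, sub_mul, mul_sub, one_mul,
    hp.isIdempotentElem.eq, ← mul_assoc]

theorem IsStarProjection.eq_of_isMoorePenroseInverse {R : Type*} [Ring R] [StarRing R]
    (hR : ∀ x : R, x * star x = 0 → x = 0) {p q b c : R}
    (hp : IsStarProjection p) (hq : IsStarProjection q)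
    (hb : IsMoorePenroseInverse (p - p * q * p) b)
    (hc : IsMoorePenroseInverse (p * (1 - q)) c) :
    c = (1 - q) * p * b := by
  rw [← hp.mul_one_sub_mul_star hq] at hb
  rw [hc.unique (hb.star_mul_of_mul_star hR), star_mul, hp.isSelfAdjoint.star_eq,
    hq.one_sub.isSelfAdjoint.star_eq]

section LinearMap

variable {H : Type*} [NormedAddCommGroup H] [InnerProductSpace ℂ H] [FiniteDimensional ℂ H]

theorem LinearMap.eq_zero_of_mul_star_self_eq_zero {A : Module.End ℂ H}
    (h : A * star A = 0) : A = 0 := by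
  have hker : ker (adjoint A) = ⊤ := by
    rw [← ker_self_comp_adjoint, ← star_eq_adjoint]
    exact ker_eq_top.2 h
  rw [← star_eq_zero, star_eq_adjoint, ← ker_eq_top, hker]

theorem isMPInv_iff_isMoorePenroseInverse {A B : Module.End ℂ H} :
    IsMPInv A B ↔ IsMoorePenroseInverse A B :=
  ⟨fun ⟨h₁, h₂, h₃, h₄⟩ => ⟨h₁, h₂, h₃, h₄⟩,
    fun ⟨h₁, h₂, h₃, h₄⟩ => ⟨h₁, h₂, h₃, h₄⟩⟩

end LinearMap

/-- `(Π(I − Δ))⁺ = (I − Δ) Π (Π − ΠΔΠ)⁺`. -/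
theorem stmt4 {H : Type*} [NormedAddCommGroup H] [InnerProductSpace ℂ H]
    [FiniteDimensional ℂ H]
    (Pr Dl : H →ₗ[ℂ] H)
    (hPr : Pr ∘ₗ Pr = Pr) (hPra : adjoint Pr = Pr)
    (hDl : Dl ∘ₗ Dl = Dl) (hDla : adjoint Dl = Dl)
    (B : H →ₗ[ℂ] H) (hB : IsMPInv (Pr - Pr ∘ₗ Dl ∘ₗ Pr) B)
    (C : H →ₗ[ℂ] H) (hC : IsMPInv (Pr ∘ₗ (LinearMap.id - Dl)) C) :
    C = (LinearMap.id - Dl) ∘ₗ Pr ∘ₗ B := by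
  have hp : IsStarProjection Pr := ⟨hPr, by rw [IsSelfAdjoint, star_eq_adjoint, hPra]⟩
  have hq : IsStarProjection Dl := ⟨hDl, by rw [IsSelfAdjoint, star_eq_adjoint, hDla]⟩
  have hB' : IsMoorePenroseInverse (Pr - Pr * Dl * Pr) B :=
    isMPInv_iff_isMoorePenroseInverse.1 hB
  have hC' : IsMoorePenroseInverse (Pr * (1 - Dl)) C :=
    isMPInv_iff_isMoorePenroseInverse.1 hC
  have hR : ∀ A : Module.End ℂ H, A * star A = 0 → A = 0 := fun _ =>
    eq_zero_of_mul_star_self_eq_zero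
  rw [hp.eq_of_isMoorePenroseInverse hR hq hB' hC', mul_assoc]
  rfl
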